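/- Let d, f, g be real numbers with 1 < d² < 2, f > 0, g > 0, define σ*(h) = (√(h²(h²(d²−1)² + 2f²g²(d²+1)) + f⁴g⁴) + h²(d²−1) + f²g²)/(2g²), K(h) = d g σ*(h)/(g²σ*(h) + h²), and VoI(h) = K(h)²·σ*(h). Then zero signal noise is a strict local maximum of the Value of Information: VoI(0) = d²f²/g² and there exists δ > 0 such that VoI(h) < d²f²/g² for all h with 0 < h < δ. -/

import Mathlib

/-!
The steady-state variance `σ = σ*(h)` is the positive root of the Riccati fixed-point equation
`g²σ² = ((d² - 1)h² + f²g²)σ + f²h²`. Modulo this equation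
`g⁴σ³ - f²(g²σ + h²)² = σh²((d² - 1)²h² - f²g²(2 - d²)) - f²h⁴(2 - d²)`,
and `VoI(h) < d²f²/g²` says exactly that the left side is negative. For `d² < 2` both terms on the
right are negative as soon as `(d² - 1)²h² < f²g²(2 - d²)`, i.e. for all small `h > 0`.
-/

open Real

noncomputable def steadyStateVariance (d f g h : ℝ) : ℝ :=
  (√(h ^ 2 * (h ^ 2 * (d ^ 2 - 1) ^ 2 + 2 * f ^ 2 * g ^ 2 * (d ^ 2 + 1)) + f ^ 4 * g ^ 4)
    + h ^ 2 * (d ^ 2 - 1) + f ^ 2 * g ^ 2) / (2 * g ^ 2)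

section SteadyStateVariance

variable {d f g : ℝ}

theorem steadyStateVariance_zero (hg : g ≠ 0) : steadyStateVariance d f g 0 = f ^ 2 := by
  have hroot : √((0 : ℝ) ^ 2 * ((0 : ℝ) ^ 2 * (d ^ 2 - 1) ^ 2 + 2 * f ^ 2 * g ^ 2 * (d ^ 2 + 1))
      + f ^ 4 * g ^ 4) = f ^ 2 * g ^ 2 := by
    rw [← sqrt_sq (by positivity : 0 ≤ f ^ 2 * g ^ 2)]
    ring_nf
  rw [steadyStateVariance, hroot]
  field_simp
  ring

theorem steadyStateVariance_riccati (hg : g ≠ 0) (h : ℝ) :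
    g ^ 2 * steadyStateVariance d f g h ^ 2
      = ((d ^ 2 - 1) * h ^ 2 + f ^ 2 * g ^ 2) * steadyStateVariance d f g h + f ^ 2 * h ^ 2 := by
  set A := (d ^ 2 - 1) * h ^ 2 + f ^ 2 * g ^ 2 with hA
  have hdisc : discrim (g ^ 2) (-A) (-(f ^ 2 * h ^ 2))
      = √(A ^ 2 + 4 * f ^ 2 * g ^ 2 * h ^ 2) * √(A ^ 2 + 4 * f ^ 2 * g ^ 2 * h ^ 2) := by
    rw [mul_self_sqrt (by positivity), discrim]
    ring
  have hformula : steadyStateVariance d f g h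
      = (-(-A) + √(A ^ 2 + 4 * f ^ 2 * g ^ 2 * h ^ 2)) / (2 * g ^ 2) := by
    rw [steadyStateVariance, hA]
    ring_nf
  have hroot := (quadratic_eq_zero_iff (pow_ne_zero 2 hg) hdisc _).mpr (Or.inl hformula)
  linear_combination hroot

theorem steadyStateVariance_pos (hd : 1 ≤ d ^ 2) (hf : f ≠ 0) (hg : g ≠ 0) (h : ℝ) :
    0 < steadyStateVariance d f g h := by
  have : 0 ≤ h ^ 2 * (d ^ 2 - 1) := mul_nonneg (sq_nonneg h) (by linarith)
  unfold steadyStateVariance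
  positivity

end SteadyStateVariance

theorem cube_lt_of_riccati {d f g h σ : ℝ} (hσ : 0 < σ) (hh : h ≠ 0)
    (hsmall : (d ^ 2 - 1) ^ 2 * h ^ 2 < f ^ 2 * g ^ 2 * (2 - d ^ 2))
    (hric : g ^ 2 * σ ^ 2 = ((d ^ 2 - 1) * h ^ 2 + f ^ 2 * g ^ 2) * σ + f ^ 2 * h ^ 2) :
    g ^ 4 * σ ^ 3 < f ^ 2 * (g ^ 2 * σ + h ^ 2) ^ 2 := by
  have hd : 0 < 2 - d ^ 2 :=
    pos_of_mul_pos_right ((by positivity : 0 ≤ (d ^ 2 - 1) ^ 2 * h ^ 2).trans_lt hsmall)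
      (by positivity)
  have hdiff : g ^ 4 * σ ^ 3 - f ^ 2 * (g ^ 2 * σ + h ^ 2) ^ 2
      = σ * h ^ 2 * ((d ^ 2 - 1) ^ 2 * h ^ 2 - f ^ 2 * g ^ 2 * (2 - d ^ 2))
        - f ^ 2 * h ^ 4 * (2 - d ^ 2) := by
    linear_combination (g ^ 2 * σ + (d ^ 2 - 1) * h ^ 2) * hric
  have hfirst : σ * h ^ 2 * ((d ^ 2 - 1) ^ 2 * h ^ 2 - f ^ 2 * g ^ 2 * (2 - d ^ 2)) < 0 :=
    mul_neg_of_pos_of_neg (by positivity) (by linarith)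
  have hsecond : 0 ≤ f ^ 2 * h ^ 4 * (2 - d ^ 2) := by positivity
  linarith

theorem sq_div_mul_lt_of_cube_lt {d f g h σ : ℝ} (hd : d ≠ 0) (hg : g ≠ 0)
    (hden : 0 < g ^ 2 * σ + h ^ 2) (hcube : g ^ 4 * σ ^ 3 < f ^ 2 * (g ^ 2 * σ + h ^ 2) ^ 2) :
    (d * g * σ / (g ^ 2 * σ + h ^ 2)) ^ 2 * σ < d ^ 2 * f ^ 2 / g ^ 2 := by
  rw [div_pow, div_mul_eq_mul_div, div_lt_div_iff₀ (by positivity) (by positivity)]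
  calc (d * g * σ) ^ 2 * σ * g ^ 2 = d ^ 2 * (g ^ 4 * σ ^ 3) := by ring
    _ < d ^ 2 * (f ^ 2 * (g ^ 2 * σ + h ^ 2) ^ 2) := by gcongr
    _ = d ^ 2 * f ^ 2 * (g ^ 2 * σ + h ^ 2) ^ 2 := by ring

/-- For growth rates with `1 < d² < 2`, zero signal noise is a strict local maximum of the
Value of Information: `VoI(0) = d²f²/g²` and `VoI(h) < d²f²/g²` for all small `h > 0`. -/
theorem voi_strict_local_max_at_zero_noise (d f g : ℝ)
    (hd1 : 1 < d ^ 2) (hd2 : d ^ 2 < 2) (hf : 0 < f) (hg : 0 < g)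
    (σstar K VoI : ℝ → ℝ)
    (hσ : ∀ h : ℝ, σstar h =
      (Real.sqrt (h ^ 2 * (h ^ 2 * (d ^ 2 - 1) ^ 2 + 2 * f ^ 2 * g ^ 2 * (d ^ 2 + 1))
        + f ^ 4 * g ^ 4) + h ^ 2 * (d ^ 2 - 1) + f ^ 2 * g ^ 2) / (2 * g ^ 2))
    (hK : ∀ h : ℝ, K h = d * g * σstar h / (g ^ 2 * σstar h + h ^ 2))
    (hV : ∀ h : ℝ, VoI h = (K h) ^ 2 * σstar h) :
    VoI 0 = d ^ 2 * f ^ 2 / g ^ 2 ∧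
      ∃ δ : ℝ, 0 < δ ∧ ∀ h : ℝ, 0 < h → h < δ → VoI h < d ^ 2 * f ^ 2 / g ^ 2 := by
  obtain rfl : σstar = steadyStateVariance d f g := funext hσ
  refine ⟨by rw [hV, hK, steadyStateVariance_zero hg.ne']; field_simp; ring, ?_⟩
  have hc : 0 < f * g * √(2 - d ^ 2) := mul_pos (by positivity) (sqrt_pos.mpr (by linarith))
  refine ⟨f * g * √(2 - d ^ 2) / (d ^ 2 - 1), div_pos hc (by linarith), fun h hh hδ => ?_⟩
  have hsmall : (d ^ 2 - 1) ^ 2 * h ^ 2 < f ^ 2 * g ^ 2 * (2 - d ^ 2) := by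
    have := pow_lt_pow_left₀ ((lt_div_iff₀' (by linarith)).mp hδ)
      (mul_nonneg (by linarith) hh.le) two_ne_zero
    rwa [mul_pow, mul_pow, mul_pow, sq_sqrt (by linarith)] at this
  have hσpos := steadyStateVariance_pos hd1.le hf.ne' hg.ne' h
  rw [hV, hK]
  exact sq_div_mul_lt_of_cube_lt (by rintro rfl; norm_num at hd1) hg.ne' (by positivity)
    (cube_lt_of_riccati hσpos hh.ne' hsmall (steadyStateVariance_riccati hg.ne' h))
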